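/- arXiv:2505.13460 — 5 statements merged into one kernel-verified Lean document; each statement's English description precedes it below -/
import Mathlib

section
/- Monotonicity of the alternative predecessor operator: let V be a finite vertex set, ∇ : V → Set ℕ with ∇(V') = (⋂_{v'∈V'} ∇(v')) \ (⋃_{v'∉V'} ∇(v')) for V' ⊆ V. For S, S' ⊆ V × Set ℕ with S ⪯̃ S' (i.e., for every (v,K) ∈ S there is (v,K') ∈ S' with K ⊆ K'), define KPredAlt(S) = { ⋃_{V' ⊆ V} (∇(V') ∩ ⋂_{v'∈V'} K_{v'}) | for each v' ∈ V, (v', K_{v'}) ∈ S }. Then, assuming S assigns at least one set K_{v'} to every vertex v' (i.e., ∀ v' ∈ V ∃ K, (v',K) ∈ S, and similarly for S'), every element of KPredAlt(S) is contained in some element of KPredAlt(S'); in particular if additionally S' ⪯̃ S then ⌈KPredAlt(S)⌉ = ⌈KPredAlt(S')⌉. -/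
/-- `∇(V')`: numbers leading exactly to the vertices of `V'`. -/
def nablaSet {V : Type*} (f : V → Set ℕ) (V' : Set V) : Set ℕ :=
  (⋂ v ∈ V', f v) \ (⋃ v ∈ V'ᶜ, f v)

/-- `S ⪯̃ S'` on sets of pairs `(v, K)`. -/
def wliftP {V : Type*} (S S' : Set (V × Set ℕ)) : Prop :=
  ∀ p ∈ S, ∃ q ∈ S', p.1 = q.1 ∧ p.2 ⊆ q.2

/-- The alternative predecessor operator. -/
def KPredAlt {V : Type*} (f : V → Set ℕ) (S : Set (V × Set ℕ)) : Set (Set ℕ) :=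
  {K | ∃ g : V → Set ℕ, (∀ v', (v', g v') ∈ S) ∧
    K = ⋃ V' : Set V, nablaSet f V' ∩ ⋂ v' ∈ V', g v'}

/-- Maximal elements of a family of subsets of ℕ. -/
def maxElts (A : Set (Set ℕ)) : Set (Set ℕ) :=
  {K ∈ A | ¬ ∃ K' ∈ A, K ⊆ K' ∧ K ≠ K'}

lemma maxElts_eq_of_cofinal {A A' : Set (Set ℕ)}
    (h1 : ∀ K ∈ A, ∃ K' ∈ A', K ⊆ K')
    (h2 : ∀ K ∈ A', ∃ K' ∈ A, K ⊆ K') :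
    maxElts A = maxElts A' := by
  have key : ∀ (B B' : Set (Set ℕ)), (∀ K ∈ B, ∃ K' ∈ B', K ⊆ K') →
      (∀ K ∈ B', ∃ K' ∈ B, K ⊆ K') → maxElts B ⊆ maxElts B' := by
    intro B B' hb hb' K hK
    obtain ⟨hKB, hmax⟩ := hK
    obtain ⟨L, hL, hKL⟩ := hb K hKB
    obtain ⟨M, hM, hLM⟩ := hb' L hL
    have hKM : K = M := by
      by_contra hne
      exact hmax ⟨M, hM, hKL.trans hLM, hne⟩
    have hKLeq : K = L := subset_antisymm hKL (hKM ▸ hLM)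
    subst hKLeq
    refine ⟨hL, ?_⟩
    rintro ⟨N, hN, hKN, hne⟩
    obtain ⟨P, hP, hNP⟩ := hb' N hN
    have : K = P := by
      by_contra hne'
      exact hmax ⟨P, hP, hKN.trans hNP, hne'⟩
    exact hne (subset_antisymm hKN (this ▸ hNP))
  exact subset_antisymm (key A A' h1 h2) (key A' A h2 h1)

theorem stmt_10 {V : Type*} [Fintype V] (f : V → Set ℕ)
    (S S' : Set (V × Set ℕ))
    (hS : ∀ v' : V, ∃ K, (v', K) ∈ S)
    (hS' : ∀ v' : V, ∃ K, (v', K) ∈ S')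
    (h : wliftP S S') :
    (∀ K ∈ KPredAlt f S, ∃ K' ∈ KPredAlt f S', K ⊆ K') ∧
    (wliftP S' S → maxElts (KPredAlt f S) = maxElts (KPredAlt f S')) := by
  have main : ∀ (T T' : Set (V × Set ℕ)), wliftP T T' →
      ∀ K ∈ KPredAlt f T, ∃ K' ∈ KPredAlt f T', K ⊆ K' := by
    intro T T' hT K hK
    obtain ⟨g, hg, rfl⟩ := hK
    choose g' hg' heq hsub using fun v => hT (v, g v) (hg v)
    refine ⟨⋃ V' : Set V, nablaSet f V' ∩ ⋂ v' ∈ V', (g' v').2,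
      ⟨fun v => (g' v).2, fun v => by have e : (v, (g' v).2) = g' v := Prod.ext (heq v) rfl; exact e ▸ hg' v, rfl⟩, ?_⟩
    refine Set.iUnion_mono fun V' => Set.inter_subset_inter_right _ ?_
    exact Set.iInter₂_mono fun v _ => hsub v
  exact ⟨main S S' h, fun h' => maxElts_eq_of_cofinal (main S S' h) (main S' S h')⟩
end

section
/- Second inclusion: with notation as below, if K = ⋃_{V'⊆V} (∇(V') ∩ ⋂_{v'∈V'} K_{v'}) for some choice (v', K_{v'}) ∈ S, then for every vertex v_j ∈ V one has K ∩ ∇(v_j) ⊆ K_{v_j}; consequently K ∈ KPred(⌊S⌋), where ⌊S⌋ is the downward closure of S in the second coordinate. -/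
/-- The constrained-predecessor operator. -/
def KPred {V : Type*} (f : V → Set ℕ) (S : Set (V × Set ℕ)) : Set (Set ℕ) :=
  {K | ∀ v' : V, (v', K ∩ f v') ∈ S}

/-- Downward closure of a set of pairs in the second coordinate. -/
def expandP {V : Type*} (S : Set (V × Set ℕ)) : Set (V × Set ℕ) :=
  {p | ∃ K', (p.1, K') ∈ S ∧ p.2 ⊆ K'}

theorem stmt_13 {V : Type*} [Fintype V] (f : V → Set ℕ)
    (S : Set (V × Set ℕ)) (g : V → Set ℕ) (hg : ∀ v', (v', g v') ∈ S)
    (K : Set ℕ)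
    (hK : K = ⋃ V' : Set V, nablaSet f V' ∩ ⋂ v' ∈ V', g v') :
    (∀ vj : V, K ∩ f vj ⊆ g vj) ∧ K ∈ KPred f (expandP S) := by
  have h : ∀ vj : V, K ∩ f vj ⊆ g vj := by
    intro vj x ⟨hxK, hxf⟩
    rw [hK] at hxK
    obtain ⟨_, ⟨V', rfl⟩, hnab, hgs⟩ := hxK
    have hvj : vj ∈ V' := by
      by_contra hvj
      exact hnab.2 (Set.mem_biUnion hvj hxf)
    exact Set.mem_iInter₂.mp hgs vj hvj
  exact ⟨h, fun vj => ⟨g vj, hg vj, h vj⟩⟩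
end

section
/- Downward closure of the winning region: in a two-player turn-based reachability game on vertices V × Set ℕ (Eve's vertices) and V × Set ℕ × A (Adam's vertices), where from (v,K) Eve moves to (v,K,a) for any enabled a, and from (v,K,a) Adam moves to (v', K ∩ ∇(v,a,v')) for any v' with K ∩ ∇(v,a,v') ≠ ∅, and Eve's goal is to reach a vertex (t, K): if Eve has a winning strategy from (v, K) and ∅ ≠ K' ⊆ K, then Eve has a winning strategy from (v, K'). -/
/-- Eve has a winning strategy from position `(v, K)` in the knowledge game:
either the target is reached, or Eve can pick an enabled action such that
every possible answer of Adam leads to a winning position. -/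
inductive EveWins {V A : Type*} (nab : V → A → V → Set ℕ) (t : V) :
    V → Set ℕ → Prop
  | target (K : Set ℕ) : EveWins nab t t K
  | step (v : V) (K : Set ℕ) (a : A)
      (henabled : ∃ v', nab v a v' ≠ ∅)
      (hnext : ∀ v', K ∩ nab v a v' ≠ ∅ → EveWins nab t v' (K ∩ nab v a v')) :
      EveWins nab t v K

theorem stmt_15 {V A : Type*} (nab : V → A → V → Set ℕ) (t : V)
    (v : V) (K K' : Set ℕ)
    (hwin : EveWins nab t v K) (hne : K' ≠ ∅) (hsub : K' ⊆ K) :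
    EveWins nab t v K' := by
  induction hwin generalizing K' with
  | target K => exact EveWins.target K'
  | step v K a henabled hnext ih =>
    refine EveWins.step v K' a henabled (fun v' h => ?_)
    have hsub' : K' ∩ nab v a v' ⊆ K ∩ nab v a v' :=
      Set.inter_subset_inter_left _ hsub
    have hKne : K ∩ nab v a v' ≠ ∅ := fun he => h (Set.subset_eq_empty (he ▸ hsub') rfl)
    exact ih v' hKne _ h hsub'
end

section
/- Fixed-point characterization of the winning region (inductive winning implies strategy): define W⁰ = {(t, ℕ)} ∪ {(v, ∅) | v ≠ t} and W^{i+1} = W^i ∪ Pred(⌊W^i⌋), where Pred(S) = {(v,K) | ∃ enabled a at v, ∀ v' ∈ V, (v', K ∩ ∇(v,a,v')) ∈ S} and ⌊·⌋ is downward closure in the knowledge coordinate. Then for every (v,K) with K ≠ ∅ and (v,K) ∈ ⌊W^i⌋ for some i, Eve has a winning strategy from (v,K) in the knowledge game (reaching a position with vertex component t). -/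
/-- The constrained-predecessor operator. -/
def PredOp {V A : Type*} (nab : V → A → V → Set ℕ)
    (S : Set (V × Set ℕ)) : Set (V × Set ℕ) :=
  {p | ∃ a : A, (∃ v', nab p.1 a v' ≠ ∅) ∧
    ∀ v', (v', p.2 ∩ nab p.1 a v') ∈ S}

/-- The fixed-point sequence `W^i`. -/
def Wseq {V A : Type*} (nab : V → A → V → Set ℕ) (t : V) :
    ℕ → Set (V × Set ℕ)
  | 0 => {(t, Set.univ)} ∪ {p | p.1 ≠ t ∧ p.2 = ∅}
  | i + 1 => Wseq nab t i ∪ PredOp nab (expandP (Wseq nab t i))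

theorem stmt_16 {V A : Type*} (nab : V → A → V → Set ℕ) (t : V)
    (hcomplete : ∀ (v : V) (a : A), (∃ v', nab v a v' ≠ ∅) →
      ∀ k : ℕ, ∃ v', k ∈ nab v a v')
    (v : V) (K : Set ℕ) (i : ℕ)
    (hmem : (v, K) ∈ expandP (Wseq nab t i)) (hne : K ≠ ∅) :
    EveWins nab t v K := by
  induction i generalizing v K with
  | zero =>
    obtain ⟨K', hK', hsub⟩ := hmem
    rcases hK' with h | ⟨hvt, hK'e⟩
    · have hv : v = t := congrArg Prod.fst (Set.mem_singleton_iff.mp h)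
      exact hv ▸ EveWins.target K
    · exact absurd (Set.subset_empty_iff.mp (hK'e ▸ hsub)) hne
  | succ i ih =>
    obtain ⟨K', hK', hsub⟩ := hmem
    rcases hK' with h | ⟨a, hen, hall⟩
    · exact ih v K ⟨K', h, hsub⟩ hne
    · refine EveWins.step v K a hen fun v' hne' => ?_
      obtain ⟨K'', hK'', hsub''⟩ := hall v'
      exact ih v' _ ⟨K'', hK'', (Set.inter_subset_inter_left _ hsub).trans hsub''⟩ hne'
end

section
/- Closure under intersection of traversed knowledges: in the knowledge game associated with a finite parameterized arena, every Eve position (v, K) reachable from (v₀, ℕ) has a knowledge set K that is a finite intersection of sets of the form ∇(v', a, v'') (or equals ℕ). Consequently, the reachable part of the knowledge game from any (v₀, ℕ) is finite. -/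
/-- One move of the knowledge game (Eve picks an enabled action,
Adam picks a successor vertex with nonempty refined knowledge). -/
def KMove {V A : Type*} (nab : V → A → V → Set ℕ)
    (p q : V × Set ℕ) : Prop :=
  ∃ a : A, (∃ u, nab p.1 a u ≠ ∅) ∧
    q.2 = p.2 ∩ nab p.1 a q.1 ∧ q.2 ≠ ∅

theorem stmt_18 {V A : Type*} [Fintype V] [Fintype A]
    (nab : V → A → V → Set ℕ) (v₀ : V) :
    (∀ p : V × Set ℕ,
      Relation.ReflTransGen (KMove nab) (v₀, Set.univ) p →
      ∃ F : Finset (V × A × V),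
        p.2 = ⋂ x ∈ F, nab x.1 x.2.1 x.2.2) ∧
    {p : V × Set ℕ |
      Relation.ReflTransGen (KMove nab) (v₀, Set.univ) p}.Finite := by
  classical
  have h1 : ∀ p : V × Set ℕ,
      Relation.ReflTransGen (KMove nab) (v₀, Set.univ) p →
      ∃ F : Finset (V × A × V),
        p.2 = ⋂ x ∈ F, nab x.1 x.2.1 x.2.2 := by
    intro p hp
    induction hp with
    | refl => exact ⟨∅, by simp⟩
    | @tail b c _ hbc ih =>
      obtain ⟨F, hF⟩ := ih
      obtain ⟨a, -, heq, -⟩ := hbc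
      refine ⟨insert (b.1, a, c.1) F, ?_⟩
      rw [heq, hF, Finset.set_biInter_insert, Set.inter_comm]
  refine ⟨h1, ?_⟩
  apply Set.Finite.subset
    ((Set.finite_univ (α := V)).prod
      (Set.finite_range fun F : Finset (V × A × V) =>
        ⋂ x ∈ F, nab x.1 x.2.1 x.2.2))
  intro p hp
  obtain ⟨F, hF⟩ := h1 p hp
  exact ⟨trivial, F, hF.symm⟩
end
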